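/- arXiv:1002.3727 — 3 statements merged into one kernel-verified Lean document; each statement's English description precedes it below -/
import Mathlib

section
/- Let H = {z ∈ ℂ : Re z > 0} and suppose g : ℂ \ (-∞,0] → ℂ satisfies Re(ζ¹ g(ζ²/ζ¹)) ≥ 0 for all ζ¹, ζ² ∈ H. Then the set {ζ²/ζ¹ : ζ¹, ζ² ∈ H} equals ℂ \ (-∞,0], and the function h(z) = -g(z)/z maps the upper half-plane into its closure, i.e., Im h(z) ≥ 0 whenever Im z > 0. -/
/-!
A point `z` is a quotient `ζ₂ / ζ₁` of right-half-plane points iff some `ζ` has `0 < Re ζ` and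
`0 < Re (z ζ)`, and such `ζ` exist exactly off the ray `(-∞, 0]` (take `ζ = ‖z‖ + z̄`).
For `Im z > 0` the hypothesis says `Re (ζ g(z)) ≥ 0` on the open cone of these `ζ`; the point
`I / z` lies on its boundary, and `Re (I g(z) / z) = Im (-g(z) / z)`.
-/

open Complex ComplexConjugate Filter Topology

lemma nonneg_of_forall_pos_nonneg_add_mul {a c : ℝ} (h : ∀ ε > 0, 0 ≤ a + ε * c) :
    0 ≤ a := by
  have hlim : Tendsto (fun ε : ℝ => a + ε * c) (𝓝[>] 0) (𝓝 a) := by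
    have hcont : Continuous fun ε : ℝ => a + ε * c := by fun_prop
    simpa using (hcont.tendsto 0).mono_left nhdsWithin_le_nhds
  exact ge_of_tendsto hlim (eventually_nhdsWithin_of_forall h)

namespace Complex

lemma norm_add_re_pos {z : ℂ} (hz : z ∈ slitPlane) : 0 < ‖z‖ + z.re := by
  rcases mem_slitPlane_iff.1 hz with hre | him
  · positivity
  · linarith [abs_re_lt_norm.2 him, neg_abs_le z.re]

lemma mem_slitPlane_of_re_pos_of_re_mul_pos {z ζ : ℂ} (hζ : 0 < ζ.re) (hzζ : 0 < (z * ζ).re) :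
    z ∈ slitPlane := by
  rw [mem_slitPlane_iff]
  by_contra! h
  have : (z * ζ).re = z.re * ζ.re := by simp [mul_re, h.2]
  nlinarith

lemma mem_slitPlane_iff_exists_re_pos_re_mul_pos {z : ℂ} :
    z ∈ slitPlane ↔ ∃ ζ : ℂ, 0 < ζ.re ∧ 0 < (z * ζ).re := by
  refine ⟨fun hz => ?_, fun ⟨ζ, hζ, hzζ⟩ => mem_slitPlane_of_re_pos_of_re_mul_pos hζ hzζ⟩
  -- `‖z‖ + conj z` is a positive multiple of `conj √z`, which rotates `z` onto `√z`.
  refine ⟨‖z‖ + conj z, by simpa using norm_add_re_pos hz, ?_⟩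
  have hmul : z * (‖z‖ + conj z) = ‖z‖ * (z + ‖z‖) := by
    rw [mul_add, mul_conj, normSq_eq_norm_sq]; push_cast; ring
  rw [hmul, re_ofReal_mul, add_re, ofReal_re, add_comm z.re]
  exact mul_pos (norm_pos_iff.2 (slitPlane_ne_zero hz)) (norm_add_re_pos hz)

theorem setOf_div_of_re_pos_eq_slitPlane :
    {z : ℂ | ∃ ζ1 ζ2 : ℂ, 0 < ζ1.re ∧ 0 < ζ2.re ∧ z = ζ2 / ζ1} = slitPlane := by
  ext z
  rw [Set.mem_ofPred_eq, mem_slitPlane_iff_exists_re_pos_re_mul_pos]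
  constructor
  · rintro ⟨ζ1, ζ2, h1, h2, rfl⟩
    exact ⟨ζ1, h1, by rwa [div_mul_cancel₀ ζ2 (ne_zero_of_re_pos h1)]⟩
  · rintro ⟨ζ, hζ, hzζ⟩
    exact ⟨ζ, z * ζ, hζ, hzζ, (mul_div_cancel_right₀ z (ne_zero_of_re_pos hζ)).symm⟩

lemma im_neg_div_nonneg_of_forall_re_mul_nonneg {z w : ℂ} (hz : 0 < z.im)
    (hw : ∀ ζ : ℂ, 0 < ζ.re → 0 < (z * ζ).re → 0 ≤ (ζ * w).re) : 0 ≤ (-w / z).im := by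
  have hz0 : z ≠ 0 := fun h => by simp [h] at hz
  obtain ⟨ζ, hζ, hzζ⟩ :=
    mem_slitPlane_iff_exists_re_pos_re_mul_pos.1 (mem_slitPlane_iff.2 (Or.inr hz.ne'))
  have hbdry : 0 < (I / z).re := by
    rw [div_re, I_re, I_im]; simpa using div_pos hz (normSq_pos.2 hz0)
  have hI_div : (I / z * w).re = (-w / z).im := by
    rw [div_mul_eq_mul_div, mul_div_assoc, I_mul_re, neg_div, neg_im]
  refine hI_div ▸ nonneg_of_forall_pos_nonneg_add_mul (c := (ζ * w).re) fun ε hε => ?_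
  have hre : 0 < (I / z + ε * ζ).re := by
    rw [add_re, re_ofReal_mul]; exact add_pos hbdry (mul_pos hε hζ)
  have hzre : 0 < (z * (I / z + ε * ζ)).re := by
    rw [mul_add, mul_div_cancel₀ _ hz0, mul_left_comm, add_re, I_re, re_ofReal_mul, zero_add]
    exact mul_pos hε hzζ
  simpa [add_mul, mul_assoc] using hw _ hre hzre

end Complex

theorem quotient_halfplane_and_pick (g : ℂ → ℂ)
    (hg : ∀ ζ1 ζ2 : ℂ, 0 < ζ1.re → 0 < ζ2.re → 0 ≤ (ζ1 * g (ζ2 / ζ1)).re) :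
    {z : ℂ | ∃ ζ1 ζ2 : ℂ, 0 < ζ1.re ∧ 0 < ζ2.re ∧ z = ζ2 / ζ1} = Complex.slitPlane ∧
    ∀ z : ℂ, 0 < z.im → 0 ≤ (-g z / z).im := by
  refine ⟨setOf_div_of_re_pos_eq_slitPlane, fun z hz => ?_⟩
  refine im_neg_div_nonneg_of_forall_re_mul_nonneg hz fun ζ hζ hzζ => ?_
  simpa [mul_div_cancel_right₀ z (ne_zero_of_re_pos hζ)] using hg ζ (z * ζ) hζ hzζ
end

section
/- Let M be a Hilbert space, D : M → M a contraction, τ ∈ closure(𝔻²), γ ∈ M, u_λ = (1 - Dλ)⁻¹γ for λ ∈ 𝔻², and x ∈ M with (1 - Dτ)x = γ. Let δ ∈ ℂ² and let S ⊂ 𝔻² be a set approaching τ nontangentially and containing points of the form τ - zδ (z ∈ ℂ) tending to τ. Assume {u_λ : λ ∈ S} is bounded and that the operators (1 - Dμ)⁻¹D(μ - τ) are uniformly bounded for μ ∈ S. Suppose there exist sequences zₙ, wₙ → 0 with λₙ := τ - zₙδ ∈ S, μₙ := τ - wₙδ ∈ S, wₙ/zₙ bounded, and u_{λₙ} → x in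 norm. Then u_{μₙ} → x in norm. -/
open Filter Topology

/-!
Write `u_λ = (1 - Lλ)⁻¹γ` for the linear family `Lλ = D(λ¹P₁ + λ²P₂)` and
`T_λ = (1 - Lλ)⁻¹ L(λ - τ)`. Since `(1 - Lτ)x = γ`, one has `u_λ - x = T_λ x`. If `μ - τ = r(λ - τ)`
then `Lμ - Lλ = (r - 1) L(λ - τ)`, and the second resolvent identity gives
`T_μ = r T_λ + (r - 1) T_μ T_λ`, hence `u_μ - x = r (u_λ - x) + (r - 1) T_μ (u_λ - x)`.
Along the ray `λₙ = τ - zₙδ`, `μₙ = τ - wₙδ` one has `r = wₙ/zₙ`, so with `r` and `T_μ` bounded,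
`u_λₙ → x` forces `u_μₙ → x`.
-/

namespace AffineResolvent

section Algebra

variable {R V A : Type*} [CommRing R] [AddCommGroup V] [Module R V] [Ring A] [Algebra R A]
  (L : V →ₗ[R] A) (τ : V)

/-- The operator `(1 - Dλ)⁻¹ D(λ - τ)` of the paper, for a general linear family `L` in place
of `λ ↦ D(λ¹P₁ + λ²P₂)`. -/
noncomputable def deviation (lam : V) : A :=
  Ring.inverse (1 - L lam) * L (lam - τ)

theorem deviation_eq_of_sub_eq_smul {lam μ : V} (hlam : IsUnit (1 - L lam))
    (hμ : IsUnit (1 - L μ)) {r : R} (hr : μ - τ = r • (lam - τ)) :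
    deviation L τ μ =
      r • deviation L τ lam + (r - 1) • (deviation L τ μ * deviation L τ lam) := by
  have hstep : (1 - L lam) - (1 - L μ) = (r - 1) • L (lam - τ) := by
    rw [sub_sub_sub_cancel_left, ← map_sub, sub_smul, one_smul, ← map_smul, ← hr, ← map_sub]
    congr 1
    abel
  have hresolvent := Ring.inverse_sub_inverse (iff_of_true hμ hlam)
  rw [hstep, sub_eq_iff_eq_add] at hresolvent
  have hLμ : L (μ - τ) = r • L (lam - τ) := by rw [hr, map_smul]
  simp only [deviation, hLμ]
  conv_lhs => rw [hresolvent]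
  simp only [smul_mul_assoc, mul_smul_comm, add_mul, mul_assoc, smul_add, smul_smul]
  module

end Algebra

section Operator

variable {𝕜 V M : Type*} [NontriviallyNormedField 𝕜] [AddCommGroup V] [Module 𝕜 V]
  [NormedAddCommGroup M] [NormedSpace 𝕜 M] (L : V →ₗ[𝕜] (M →L[𝕜] M)) (τ : V)

theorem inverse_apply_sub_eq_deviation_apply {lam : V} (hlam : IsUnit (1 - L lam))
    {γ x : M} (hx : (1 - L τ) x = γ) :
    Ring.inverse (1 - L lam) γ - x = deviation L τ lam x := by
  have hdiff : (1 - L τ) - (1 - L lam) = L (lam - τ) := by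
    rw [map_sub]
    abel
  rw [deviation, ← hdiff, mul_sub, Ring.inverse_mul_cancel _ hlam, ← hx]
  rfl

theorem inverse_apply_sub_eq_of_sub_eq_smul {lam μ : V} (hlam : IsUnit (1 - L lam))
    (hμ : IsUnit (1 - L μ)) {r : 𝕜} (hr : μ - τ = r • (lam - τ)) {γ x : M}
    (hx : (1 - L τ) x = γ) :
    Ring.inverse (1 - L μ) γ - x = r • (Ring.inverse (1 - L lam) γ - x) +
      (r - 1) • deviation L τ μ (Ring.inverse (1 - L lam) γ - x) := by
  rw [inverse_apply_sub_eq_deviation_apply L τ hμ hx,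
    inverse_apply_sub_eq_deviation_apply L τ hlam hx]
  conv_lhs => rw [deviation_eq_of_sub_eq_smul L τ hlam hμ hr]
  rfl

theorem tendsto_inverse_apply_of_sub_eq_smul {ι : Type*} {l : Filter ι} {lam μ : ι → V}
    (hlam : ∀ i, IsUnit (1 - L (lam i))) (hμ : ∀ i, IsUnit (1 - L (μ i)))
    {r : ι → 𝕜} (hr : ∀ i, μ i - τ = r i • (lam i - τ))
    (hr_bdd : IsBoundedUnder (· ≤ ·) l (fun i => ‖r i‖))
    (hdev_bdd : IsBoundedUnder (· ≤ ·) l (fun i => ‖deviation L τ (μ i)‖))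
    {γ x : M} (hx : (1 - L τ) x = γ)
    (hconv : Tendsto (fun i => Ring.inverse (1 - L (lam i)) γ) l (𝓝 x)) :
    Tendsto (fun i => Ring.inverse (1 - L (μ i)) γ) l (𝓝 x) := by
  rw [← tendsto_sub_nhds_zero_iff] at hconv ⊢
  have hr_sub_bdd : IsBoundedUnder (· ≤ ·) l (fun i => ‖r i - 1‖) := by
    obtain ⟨C, hC⟩ := hr_bdd
    refine ⟨C + 1, eventually_map.2 ?_⟩
    filter_upwards [eventually_map.1 hC] with i hi
    exact (norm_sub_le _ _).trans (by simpa using hi)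
  have hdev_conv : Tendsto (fun i => deviation L τ (μ i) (Ring.inverse (1 - L (lam i)) γ - x))
      l (𝓝 0) :=
    hconv.op_zero_isBoundedUnder_le hdev_bdd (fun v T => T v)
      fun v T => (T.le_opNorm v).trans_eq (mul_comm _ _)
  have hsum := (hr_bdd.smul_tendsto_zero hconv).add (hr_sub_bdd.smul_tendsto_zero hdev_conv)
  rw [add_zero] at hsum
  exact hsum.congr fun i => (inverse_apply_sub_eq_of_sub_eq_smul L τ (hlam i) (hμ i) (hr i) hx).symm

end Operator

end AffineResolvent

theorem nontangential_ray_limit_unique_general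
    {M : Type*} [NormedAddCommGroup M] [InnerProductSpace ℂ M]
    (P₁ P₂ D : M →L[ℂ] M)
    (hinv : ∀ lam : ℂ × ℂ, ‖lam.1‖ < 1 → ‖lam.2‖ < 1 →
      IsUnit (1 - D * (lam.1 • P₁ + lam.2 • P₂)))
    (τ : ℂ × ℂ)
    (γ x : M) (hx : (1 - D * (τ.1 • P₁ + τ.2 • P₂)) x = γ)
    (δ : ℂ × ℂ) (S : Set (ℂ × ℂ))
    (hS𝔻 : S ⊆ {lam : ℂ × ℂ | ‖lam.1‖ < 1 ∧ ‖lam.2‖ < 1})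
    (hopbdd : ∃ K : ℝ, ∀ μ ∈ S,
      ‖Ring.inverse (1 - D * (μ.1 • P₁ + μ.2 • P₂)) *
        (D * ((μ.1 - τ.1) • P₁ + (μ.2 - τ.2) • P₂))‖ ≤ K)
    (z w : ℕ → ℂ)
    (hzne : ∀ n, z n ≠ 0)
    (hlamS : ∀ n, τ - z n • δ ∈ S) (hμS : ∀ n, τ - w n • δ ∈ S)
    (hratio : ∃ K : ℝ, ∀ n, ‖w n / z n‖ ≤ K)
    (hconv : Tendsto (fun n =>
        Ring.inverse (1 - D * ((τ - z n • δ).1 • P₁ + (τ - z n • δ).2 • P₂)) γ)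
      atTop (𝓝 x)) :
    Tendsto (fun n =>
        Ring.inverse (1 - D * ((τ - w n • δ).1 • P₁ + (τ - w n • δ).2 • P₂)) γ)
      atTop (𝓝 x) := by
  obtain ⟨K, hK⟩ := hopbdd
  let L : ℂ × ℂ →ₗ[ℂ] (M →L[ℂ] M) :=
    { toFun := fun lam => D * (lam.1 • P₁ + lam.2 • P₂)
      map_add' := fun a b => by
        simp only [Prod.fst_add, Prod.snd_add, add_smul]
        noncomm_ring
      map_smul' := fun c a => by
        simp only [Prod.smul_fst, Prod.smul_snd, smul_eq_mul, RingHom.id_apply, ← mul_smul_comm,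
          smul_add, smul_smul] }
  have hunit : ∀ lam ∈ S, IsUnit (1 - L lam) := fun lam h => hinv lam (hS𝔻 h).1 (hS𝔻 h).2
  have hray : ∀ n, (τ - w n • δ) - τ = (w n / z n) • ((τ - z n • δ) - τ) := fun n => by
    simp [smul_smul, div_mul_cancel₀ _ (hzne n)]
  exact AffineResolvent.tendsto_inverse_apply_of_sub_eq_smul L τ (fun n => hunit _ (hlamS n))
    (fun n => hunit _ (hμS n)) hray (isBoundedUnder_of hratio)
    (isBoundedUnder_of ⟨K, fun n => hK _ (hμS n)⟩) hx hconv

/-- The core convergence argument of Theorem `xdelta`: if `u_{λₙ} → x` along one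
sequence on the ray through `τ` in direction `δ`, then `u_{μₙ} → x` along any other
such sequence with `wₙ/zₙ` bounded. -/
theorem nontangential_ray_limit_unique
    {M : Type*} [NormedAddCommGroup M] [InnerProductSpace ℂ M] [CompleteSpace M]
    (P₁ P₂ D : M →L[ℂ] M)
    (hP₁ : P₁ * P₁ = P₁) (hP₂ : P₂ * P₂ = P₂) (hP₁₂ : P₁ * P₂ = 0) (hPsum : P₁ + P₂ = 1)
    (hD : ‖D‖ ≤ 1)
    (hinv : ∀ lam : ℂ × ℂ, ‖lam.1‖ < 1 → ‖lam.2‖ < 1 →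
      IsUnit (1 - D * (lam.1 • P₁ + lam.2 • P₂)))
    (τ : ℂ × ℂ) (hτ : ‖τ.1‖ ≤ 1 ∧ ‖τ.2‖ ≤ 1)
    (γ x : M) (hx : (1 - D * (τ.1 • P₁ + τ.2 • P₂)) x = γ)
    (δ : ℂ × ℂ) (S : Set (ℂ × ℂ))
    (hS𝔻 : S ⊆ {lam : ℂ × ℂ | ‖lam.1‖ < 1 ∧ ‖lam.2‖ < 1})
    (hSτ : τ ∈ closure S)
    (hSnt : ∃ C : ℝ, ∀ lam ∈ S,
      max ‖τ.1 - lam.1‖ ‖τ.2 - lam.2‖ ≤ C * (1 - max ‖lam.1‖ ‖lam.2‖))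
    (hubdd : ∃ B : ℝ, ∀ lam ∈ S, ‖lam.1‖ < 1 → ‖lam.2‖ < 1 →
      ‖Ring.inverse (1 - D * (lam.1 • P₁ + lam.2 • P₂)) γ‖ ≤ B)
    (hopbdd : ∃ K : ℝ, ∀ μ ∈ S,
      ‖Ring.inverse (1 - D * (μ.1 • P₁ + μ.2 • P₂)) *
        (D * ((μ.1 - τ.1) • P₁ + (μ.2 - τ.2) • P₂))‖ ≤ K)
    (z w : ℕ → ℂ)
    (hz0 : Tendsto z atTop (𝓝 0)) (hw0 : Tendsto w atTop (𝓝 0))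
    (hzne : ∀ n, z n ≠ 0)
    (hlamS : ∀ n, τ - z n • δ ∈ S) (hμS : ∀ n, τ - w n • δ ∈ S)
    (hratio : ∃ K : ℝ, ∀ n, ‖w n / z n‖ ≤ K)
    (hconv : Tendsto (fun n =>
        Ring.inverse (1 - D * ((τ - z n • δ).1 • P₁ + (τ - z n • δ).2 • P₂)) γ)
      atTop (𝓝 x)) :
    Tendsto (fun n =>
        Ring.inverse (1 - D * ((τ - w n • δ).1 • P₁ + (τ - w n • δ).2 • P₂)) γ)
      atTop (𝓝 x) :=
  nontangential_ray_limit_unique_general P₁ P₂ D hinv τ γ x hx δ S hS𝔻 hopbdd z w hzne hlamS hμS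
    hratio hconv
end

section
/- Let x : H_τ → M be a function into a Hilbert space which is homogeneous of degree 0 on the cone H_τ, let τ ∈ 𝕋², ω ∈ 𝕋, y ∈ M, and define, for δ ∈ H_τ, Dφ(δ) := -ω⟨δ·x(δ), τ·y⟩. If Re⟨δ·x(δ), τ·y⟩ ≥ 0 for all δ ∈ H_τ, then there exists a function h in the Pick class, real-valued and analytic on (0,∞), such that Dφ(δ) = ω·conj(τ²)δ²·h(conj(τ²)δ²/(conj(τ¹)δ¹)) for all δ ∈ H_τ, provided additionally that δ ↦ ⟨δ·x(δ), τ·y⟩ is holomorphic on H_τ. -/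
/-!
A function `F` that is homogeneous of degree one on the product of two right half-planes is
determined by its dehomogenization `g(z) = F(1, z)`, and `Re F ≥ 0` says that `Re (ζ g(z)) ≥ 0`
for every `ζ` with `Re ζ > 0` and `Re (ζ z) > 0`. Letting `ζ` tend to the boundary of this cone
(`ζ → i z̄` when `Im z > 0`, and `ζ → ± i` when `z > 0`) shows that `h(z) = -g(z)/z` maps the
upper half-plane to its closure and is real on `(0, ∞)`. Since `(z^{-1/2}, z^{1/2})` lies on the
ray through `(1, z)` and in the domain of `F`, `g` is holomorphic on the whole slit plane.
The theorem is the case `F(ζ) = ⟨τ·ζ·x(τ·ζ), τ·y⟩`.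
-/

open Complex ComplexConjugate Filter Topology

namespace Complex

lemma re_sqrt_pos {z : ℂ} (hz : z ∈ slitPlane) : 0 < z.sqrt.re := by
  rw [sqrt, cpow_inv_two_re, Real.sqrt_pos]
  rcases hz with hre | him
  · positivity
  · linarith [abs_re_lt_norm.2 him, neg_abs_le z.re]

lemma sqrt_mul_sqrt (z : ℂ) : z.sqrt * z.sqrt = z := by
  rw [← sq]
  exact cpow_ofNat_inv_pow z 2

lemma div_mem_slitPlane_of_re_pos {a b : ℂ} (ha : 0 < a.re) (hb : 0 < b.re) :
    b / a ∈ slitPlane := by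
  by_contra hq
  rw [mem_slitPlane_iff, not_or, not_lt, not_not] at hq
  have hb_re : b.re = (b / a).re * a.re := by
    conv_lhs => rw [← div_mul_cancel₀ b (ne_zero_of_re_pos ha)]
    simp [mul_re, hq.2]
  nlinarith

lemma mul_conj_mul_cancel {u : ℂ} (hu : ‖u‖ = 1) (w : ℂ) : u * (conj u * w) = w := by
  rw [← mul_assoc, mul_conj', hu]
  simp

end Complex

lemma re_mul_nonneg_of_eventually {ζ v w : ℂ}
    (h : ∀ᶠ ε : ℝ in 𝓝[>] 0, 0 ≤ ((ζ + ε * v) * w).re) : 0 ≤ (ζ * w).re := by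
  have hcont : Continuous fun ε : ℝ => ((ζ + ε * v) * w).re := by fun_prop
  have hlim := tendsto_nhdsWithin_of_tendsto_nhds (s := Set.Ioi 0) (hcont.tendsto 0)
  simp only [ofReal_zero, zero_mul, add_zero] at hlim
  exact ge_of_tendsto hlim h

lemma im_neg_div_nonneg_of_re_mul_nonneg {z w : ℂ} (hz : 0 < z.im)
    (hw : ∀ ζ : ℂ, 0 < ζ.re → 0 < (ζ * z).re → 0 ≤ (ζ * w).re) : 0 ≤ (-w / z).im := by
  have hnormSq : 0 < normSq z := normSq_pos.2 (by rintro rfl; simp at hz)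
  have hζ_re : ∀ᶠ ε : ℝ in 𝓝[>] 0, 0 < (I * conj z + ε * conj z).re := by
    have hcont : Continuous fun ε : ℝ => (I * conj z + ε * conj z).re := by fun_prop
    exact (tendsto_nhdsWithin_of_tendsto_nhds (hcont.tendsto 0)).eventually_const_lt
      (by simpa using hz)
  have hdual : 0 ≤ (I * conj z * w).re := by
    refine re_mul_nonneg_of_eventually (v := conj z) ?_
    filter_upwards [hζ_re, self_mem_nhdsWithin] with ε hε (hε_pos : 0 < ε)
    refine hw _ hε ?_
    have hζz : (I * conj z + ε * conj z) * z = (I + ε) * (normSq z : ℂ) := by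
      rw [← add_mul, mul_assoc, normSq_eq_conj_mul_self]
    rw [hζz]
    simpa using mul_pos hε_pos hnormSq
  have him : (-w / z).im = (I * conj z * w).re / normSq z := by
    simp only [div_im, neg_im, neg_re, mul_re, mul_im, I_re, I_im, conj_re, conj_im]
    ring
  rw [him]
  exact div_nonneg hdual hnormSq.le

lemma im_eq_zero_of_re_mul_nonneg {w : ℂ} (hw : ∀ ζ : ℂ, 0 < ζ.re → 0 ≤ (ζ * w).re) :
    w.im = 0 := by
  have hdual : ∀ σ : ℂ, σ.re = 0 → 0 ≤ (σ * w).re := fun σ hσ =>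
    re_mul_nonneg_of_eventually (v := 1) <| by
      filter_upwards [self_mem_nhdsWithin] with ε (hε : 0 < ε)
      exact hw _ (by simpa [hσ] using hε)
  have hI := hdual I (by simp)
  have hnegI := hdual (-I) (by simp)
  simp only [mul_re, I_re, I_im, neg_re, neg_im] at hI hnegI
  linarith

def rightHalfPlanePair : Set (ℂ × ℂ) := {ζ | 0 < ζ.1.re ∧ 0 < ζ.2.re}

lemma isOpen_rightHalfPlanePair : IsOpen rightHalfPlanePair :=
  (isOpen_lt continuous_const (continuous_re.comp continuous_fst)).inter
    (isOpen_lt continuous_const (continuous_re.comp continuous_snd))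

section Dehomogenize

variable (F : ℂ × ℂ → ℂ)

/-- `F (1, z)` for a `1`-homogeneous `F`, computed at the point `(z^{-1/2}, z^{1/2})` of the ray
through `(1, z)`, which lies in `rightHalfPlanePair` for every `z` in the slit plane. -/
noncomputable def dehomogenize (z : ℂ) : ℂ := z.sqrt * F (z.sqrt⁻¹, z.sqrt)

variable {F}

lemma sqrt_pair_mem_rightHalfPlanePair {z : ℂ} (hz : z ∈ slitPlane) :
    (z.sqrt⁻¹, z.sqrt) ∈ rightHalfPlanePair :=
  ⟨by simpa [inv_re] using div_pos (re_sqrt_pos hz) (normSq_pos.2 (ne_zero_of_re_pos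
    (re_sqrt_pos hz))), re_sqrt_pos hz⟩

lemma apply_eq_mul_dehomogenize
    (hhom : ∀ ζ ∈ rightHalfPlanePair, ∀ w : ℂ, w • ζ ∈ rightHalfPlanePair → F (w • ζ) = w * F ζ)
    {z ζ : ℂ} (hz : z ∈ slitPlane) (hζ : (ζ, ζ * z) ∈ rightHalfPlanePair) :
    F (ζ, ζ * z) = ζ * dehomogenize F z := by
  have hsqrt : z.sqrt ≠ 0 := ne_zero_of_re_pos (re_sqrt_pos hz)
  have hray : ((ζ, ζ * z) : ℂ × ℂ) = (ζ * z.sqrt) • (z.sqrt⁻¹, z.sqrt) := by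
    ext
    · simp [mul_assoc, hsqrt]
    · simp [mul_assoc, sqrt_mul_sqrt]
  rw [hray, hhom _ (sqrt_pair_mem_rightHalfPlanePair hz) _ (hray ▸ hζ), dehomogenize]
  ring

lemma differentiableAt_dehomogenize (hhol : DifferentiableOn ℂ F rightHalfPlanePair) {z : ℂ}
    (hz : z ∈ slitPlane) : DifferentiableAt ℂ (dehomogenize F) z := by
  have hsqrt := differentiableAt_sqrt hz
  have hF : DifferentiableAt ℂ F (z.sqrt⁻¹, z.sqrt) :=
    hhol.differentiableAt
      (isOpen_rightHalfPlanePair.mem_nhds (sqrt_pair_mem_rightHalfPlanePair hz))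
  exact hsqrt.mul <| hF.comp z <|
    (hsqrt.inv (ne_zero_of_re_pos (re_sqrt_pos hz))).prodMk hsqrt

end Dehomogenize

theorem exists_pick_of_homogeneous_of_re_nonneg (F : ℂ × ℂ → ℂ)
    (hhom : ∀ ζ ∈ rightHalfPlanePair, ∀ w : ℂ, w • ζ ∈ rightHalfPlanePair → F (w • ζ) = w * F ζ)
    (hpos : ∀ ζ ∈ rightHalfPlanePair, 0 ≤ (F ζ).re)
    (hhol : DifferentiableOn ℂ F rightHalfPlanePair) :
    ∃ h : ℂ → ℂ, DifferentiableOn ℂ h slitPlane ∧ (∀ z : ℂ, 0 < z.im → 0 ≤ (h z).im) ∧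
      (∀ r : ℝ, 0 < r → (h r).im = 0) ∧
      ∀ ζ ∈ rightHalfPlanePair, -F ζ = ζ.2 * h (ζ.2 / ζ.1) := by
  have hcone : ∀ z ∈ slitPlane, ∀ ζ : ℂ, 0 < ζ.re → 0 < (ζ * z).re →
      0 ≤ (ζ * dehomogenize F z).re :=
    fun z hz ζ h₁ h₂ => apply_eq_mul_dehomogenize hhom hz ⟨h₁, h₂⟩ ▸ hpos _ ⟨h₁, h₂⟩
  refine ⟨fun z => -dehomogenize F z / z, fun z hz => ?_, fun z hz => ?_, fun r hr => ?_,
    fun ζ hζ => ?_⟩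
  · exact ((differentiableAt_dehomogenize hhol hz).neg.div differentiableAt_id
      (slitPlane_ne_zero hz)).differentiableWithinAt
  · exact im_neg_div_nonneg_of_re_mul_nonneg hz (hcone z (Or.inr hz.ne'))
  · have hg : (dehomogenize F r).im = 0 := im_eq_zero_of_re_mul_nonneg fun ζ hζ =>
      hcone r (ofReal_mem_slitPlane.2 hr) ζ hζ (by simpa using mul_pos hζ hr)
    simp [div_ofReal_im, hg]
  · have hζ₁ : ζ.1 ≠ 0 := ne_zero_of_re_pos hζ.1
    have hζ₂ : ζ.2 ≠ 0 := ne_zero_of_re_pos hζ.2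
    have hpair : ζ = (ζ.1, ζ.1 * (ζ.2 / ζ.1)) := by rw [mul_div_cancel₀ _ hζ₁]
    have hF := apply_eq_mul_dehomogenize hhom (div_mem_slitPlane_of_re_pos hζ.1 hζ.2)
      (hpair ▸ hζ)
    rw [← hpair] at hF
    rw [hF]
    field_simp

theorem pick_function_from_homogeneous_general
    {M₁ M₂ : Type*} [NormedAddCommGroup M₁] [InnerProductSpace ℂ M₁]
    [NormedAddCommGroup M₂] [InnerProductSpace ℂ M₂]
    (τ : ℂ × ℂ) (hτ1 : ‖τ.1‖ = 1) (hτ2 : ‖τ.2‖ = 1)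
    (ω : ℂ)
    (x : ℂ × ℂ → M₁ × M₂) (y : M₁ × M₂)
    (Hτ : Set (ℂ × ℂ))
    (hHτ : Hτ = {δ : ℂ × ℂ | 0 < ((starRingEnd ℂ) τ.1 * δ.1).re ∧
                              0 < ((starRingEnd ℂ) τ.2 * δ.2).re})
    (hhom : ∀ δ ∈ Hτ, ∀ z : ℂ, z • δ ∈ Hτ → x (z • δ) = x δ)
    (f : ℂ × ℂ → ℂ)
    (hf : ∀ δ : ℂ × ℂ, f δ =
      inner ℂ (τ.1 • y.1) (δ.1 • (x δ).1) + inner ℂ (τ.2 • y.2) (δ.2 • (x δ).2))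
    (hpos : ∀ δ ∈ Hτ, 0 ≤ (f δ).re)
    (hhol : DifferentiableOn ℂ f Hτ) :
    ∃ h : ℂ → ℂ,
      DifferentiableOn ℂ h {z : ℂ | 0 < z.im} ∧
      (∀ z : ℂ, 0 < z.im → 0 ≤ (h z).im) ∧
      (∀ r : ℝ, 0 < r → AnalyticAt ℂ h (r : ℂ) ∧ (h (r : ℂ)).im = 0) ∧
      (∀ δ ∈ Hτ, -ω * f δ =
        ω * ((starRingEnd ℂ) τ.2 * δ.2) *
          h ((starRingEnd ℂ) τ.2 * δ.2 / ((starRingEnd ℂ) τ.1 * δ.1))) := by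
  let rotate : ℂ × ℂ → ℂ × ℂ := fun ζ => (τ.1 * ζ.1, τ.2 * ζ.2)
  have hrotate : ∀ ζ, rotate ζ ∈ Hτ ↔ ζ ∈ rightHalfPlanePair := by
    intro ζ
    subst hHτ
    simp only [rotate, rightHalfPlanePair, Set.mem_ofPred_eq, ← mul_assoc, conj_mul', hτ1, hτ2]
    simp
  have hf_hom : ∀ δ ∈ Hτ, ∀ w : ℂ, w • δ ∈ Hτ → f (w • δ) = w * f δ := by
    intro δ hδ w hw
    simp only [hf, hhom δ hδ w hw, Prod.smul_fst, Prod.smul_snd, smul_eq_mul, mul_smul,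
      inner_smul_right]
    ring
  obtain ⟨h, hdiff, him, hreal, hrep⟩ := exists_pick_of_homogeneous_of_re_nonneg (f ∘ rotate)
    (fun ζ hζ w hw => by
      simpa [rotate, mul_left_comm] using
        hf_hom _ ((hrotate ζ).2 hζ) w (by simpa [rotate, mul_left_comm] using (hrotate _).2 hw))
    (fun ζ hζ => hpos _ ((hrotate ζ).2 hζ))
    (hhol.comp (by fun_prop) fun ζ hζ => (hrotate ζ).2 hζ)
  refine ⟨h, hdiff.mono fun z hz => Or.inr (ne_of_gt hz), him, fun r hr =>
    ⟨hdiff.analyticAt (isOpen_slitPlane.mem_nhds (ofReal_mem_slitPlane.2 hr)), hreal r hr⟩,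
    fun δ hδ => ?_⟩
  have hδ' : (conj τ.1 * δ.1, conj τ.2 * δ.2) ∈ rightHalfPlanePair := by rwa [hHτ] at hδ
  have hrep' := hrep _ hδ'
  simp only [Function.comp_apply, rotate, mul_conj_mul_cancel hτ1,
    mul_conj_mul_cancel hτ2] at hrep'
  rw [neg_mul, ← mul_neg, hrep']
  ring

/-- Theorem `pickfunc` in abstract form: from a 0-homogeneous holomorphic `x` on
`H_τ` with `Re⟨δ·x(δ), τ·y⟩ ≥ 0`, one obtains a Pick-class function `h`, real and
analytic on `(0,∞)`, with
`-ω⟨δ·x(δ), τ·y⟩ = ω·(conj τ²)δ²·h((conj τ²)δ²/((conj τ¹)δ¹))`. -/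
theorem pick_function_from_homogeneous
    {M₁ M₂ : Type*} [NormedAddCommGroup M₁] [InnerProductSpace ℂ M₁]
    [NormedAddCommGroup M₂] [InnerProductSpace ℂ M₂]
    (τ : ℂ × ℂ) (hτ1 : ‖τ.1‖ = 1) (hτ2 : ‖τ.2‖ = 1)
    (ω : ℂ) (hω : ‖ω‖ = 1)
    (x : ℂ × ℂ → M₁ × M₂) (y : M₁ × M₂)
    (Hτ : Set (ℂ × ℂ))
    (hHτ : Hτ = {δ : ℂ × ℂ | 0 < ((starRingEnd ℂ) τ.1 * δ.1).re ∧
                              0 < ((starRingEnd ℂ) τ.2 * δ.2).re})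
    (hhom : ∀ δ ∈ Hτ, ∀ z : ℂ, z • δ ∈ Hτ → x (z • δ) = x δ)
    (f : ℂ × ℂ → ℂ)
    (hf : ∀ δ : ℂ × ℂ, f δ =
      inner ℂ (τ.1 • y.1) (δ.1 • (x δ).1) + inner ℂ (τ.2 • y.2) (δ.2 • (x δ).2))
    (hpos : ∀ δ ∈ Hτ, 0 ≤ (f δ).re)
    (hhol : DifferentiableOn ℂ f Hτ) :
    ∃ h : ℂ → ℂ,
      DifferentiableOn ℂ h {z : ℂ | 0 < z.im} ∧
      (∀ z : ℂ, 0 < z.im → 0 ≤ (h z).im) ∧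
      (∀ r : ℝ, 0 < r → AnalyticAt ℂ h (r : ℂ) ∧ (h (r : ℂ)).im = 0) ∧
      (∀ δ ∈ Hτ, -ω * f δ =
        ω * ((starRingEnd ℂ) τ.2 * δ.2) *
          h ((starRingEnd ℂ) τ.2 * δ.2 / ((starRingEnd ℂ) τ.1 * δ.1))) :=
  pick_function_from_homogeneous_general τ hτ1 hτ2 ω x y Hτ hHτ hhom f hf hpos hhol
end
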